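/- Arrow's theorem: for a social preference function F on a finite set of voters and at least three alternatives, F satisfies Pareto and IIA if and only if F is a dictatorship (there is a voter i such that F(P) equals i's ballot for all profiles P). -/

import Mathlib

/-- A profile assigns a strict linear order (ballot) on `A` to each voter. -/
def IsProfile {ι A : Type*} (P : ι → A → A → Prop) : Prop :=
  ∀ i, IsStrictTotalOrder A (P i)

/-- A social preference function maps (valid) profiles to total preorders on `A`. -/
def IsSPF {ι A : Type*} (F : (ι → A → A → Prop) → A → A → Prop) : Prop :=
  ∀ P, IsProfile P → IsTrans A (F P) ∧ IsTotal A (F P)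

/-- Pareto for SPFs: unanimous strict preference for `x` over `y` puts `x`
strictly above `y` in the social preference. -/
def ParetoSPF {ι A : Type*} (F : (ι → A → A → Prop) → A → A → Prop) : Prop :=
  ∀ P, IsProfile P → ∀ x y : A, (∀ i, P i x y) → F P x y ∧ ¬ F P y x

/-- Independence of irrelevant alternatives. -/
def IIA {ι A : Type*} (F : (ι → A → A → Prop) → A → A → Prop) : Prop :=
  ∀ P P' : ι → A → A → Prop, IsProfile P → IsProfile P' → ∀ x y : A,
    {i | P i x y} = {i | P' i x y} → (F P x y ↔ F P' x y)

set_option linter.unusedSectionVars false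
set_option maxHeartbeats 1000000

section Infra
variable {ι A : Type*} [Fintype A]

lemma sto_asymm {r : A → A → Prop} (h : IsStrictTotalOrder A r) {a b : A}
    (hab : r a b) : ¬ r b a := fun hba => h.irrefl a (h.trans _ _ _ hab hba)

lemma sto_total {r : A → A → Prop} (h : IsStrictTotalOrder A r) {a b : A}
    (hab : a ≠ b) (h2 : ¬ r a b) : r b a :=
  Classical.byContradiction fun h3 => hab (h.trichotomous a b h2 h3)

lemma rank_profile (f : ι → A → ℕ) (hf : ∀ i, Function.Injective (f i)) :
    IsProfile (fun i a b => f i a < f i b) := fun i =>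
  { trichotomous := fun a b => by
      rcases lt_trichotomy (f i a) (f i b) with h | h | h
      · exact fun h1 _ => absurd h h1
      · exact fun _ _ => hf i h
      · exact fun _ h2 => absurd h h2
    irrefl := fun a => lt_irrefl _
    trans := fun a b c => lt_trans }

open Classical in
noncomputable def rk (g : A → ℕ) (x y z : A) (a : A) : ℕ :=
  if a = x then 0 else if a = y then 1 else if a = z then 2 else 3 + g a

lemma rk_inj {g : A → ℕ} (hg : Function.Injective g) {x y z : A}
    (hxy : x ≠ y) (hxz : x ≠ z) (hyz : y ≠ z) : Function.Injective (rk g x y z) := by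
  intro a b h
  unfold rk at h
  split_ifs at h <;> first | omega | (subst_vars; rfl) | exact hg (by omega) | tauto

lemma rk_x {g : A → ℕ} {x y z : A} : rk g x y z x = 0 := by simp [rk]
lemma rk_y {g : A → ℕ} {x y z : A} (h : y ≠ x) : rk g x y z y = 1 := by simp [rk, h]
lemma rk_z {g : A → ℕ} {x y z : A} (h1 : z ≠ x) (h2 : z ≠ y) : rk g x y z z = 2 := by
  simp [rk, h1, h2]

lemma exists_third (hA : 2 < Fintype.card A) (x y : A) : ∃ z, z ≠ x ∧ z ≠ y := by
  classical
  by_contra h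
  push_neg at h
  have hsub : (Finset.univ : Finset A) ⊆ {x, y} := by
    intro z _
    rcases eq_or_ne z x with h1 | h1
    · simp [h1]
    · simp [h z h1]
  have := Finset.card_le_card hsub
  rw [Finset.card_univ] at this
  have h2 : ({x, y} : Finset A).card ≤ 2 := Finset.card_le_two
  omega

variable {F : (ι → A → A → Prop) → A → A → Prop}

/-- `S` is decisive for `x` over `y`. -/
def Dec (F : (ι → A → A → Prop) → A → A → Prop) (S : Set ι) (x y : A) : Prop :=
  ∀ P, IsProfile P → (∀ i ∈ S, P i x y) → F P x y ∧ ¬ F P y x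

/-- `S` is weakly decisive for `x` over `y`. -/
def WDec (F : (ι → A → A → Prop) → A → A → Prop) (S : Set ι) (x y : A) : Prop :=
  ∀ P, IsProfile P → (∀ i ∈ S, P i x y) → (∀ i ∉ S, P i y x) → F P x y ∧ ¬ F P y x

lemma Dec.toWDec {S : Set ι} {x y : A} (h : Dec F S x y) : WDec F S x y :=
  fun P hP h1 _ => h P hP h1

/-- transfer a strict social outcome on one profile to weak decisiveness. -/
lemma wdec_of_profile (hI : IIA F) {P : ι → A → A → Prop} (hProf : IsProfile P)
    {S : Set ι} {x y : A} (hxy : x ≠ y) (hmem : ∀ i, P i x y ↔ i ∈ S)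
    (hsoc : F P x y ∧ ¬ F P y x) : WDec F S x y := by
  intro Q hQ hQS hQS'
  have hmem' : ∀ i, P i y x ↔ i ∉ S := by
    intro i
    constructor
    · intro h hi
      exact sto_asymm (hProf i) ((hmem i).mpr hi) h
    · intro hi
      exact sto_total (hProf i) hxy (fun h => hi ((hmem i).mp h))
  have h1 : {i | Q i x y} = {i | P i x y} := by
    ext i
    simp only [Set.mem_setOf_eq, hmem i]
    constructor
    · intro h
      by_contra hi
      exact sto_asymm (hQ i) (hQS' i hi) h
    · exact hQS i
  have h2 : {i | Q i y x} = {i | P i y x} := by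
    ext i
    simp only [Set.mem_setOf_eq, hmem' i]
    constructor
    · intro h hi
      exact sto_asymm (hQ i) (hQS i hi) h
    · exact hQS' i
  exact ⟨(hI Q P hQ hProf x y h1).mpr hsoc.1,
    fun h => hsoc.2 ((hI Q P hQ hProf y x h2).mp h)⟩



variable [Fintype ι]

lemma gexists : ∃ g : A → ℕ, Function.Injective g :=
  ⟨fun a => (Fintype.equivFin A a : ℕ), fun a c h => (Fintype.equivFin A).injective (Fin.ext h)⟩

lemma lemA (hF : IsSPF F) (hPar : ParetoSPF F) (hI : IIA F) {S : Set ι} {x y b : A}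
    (hxy : x ≠ y) (hbx : b ≠ x) (hby : b ≠ y) (hw : WDec F S x y) : Dec F S x b := by
  classical
  intro P hProf hS
  obtain ⟨g, hg⟩ := gexists (A := A)
  set r : ι → A → ℕ := fun i =>
    if i ∈ S then rk g x y b else if P i x b then rk g y x b else rk g y b x with hrdef
  have hcase : ∀ i, (i ∈ S ∧ r i = rk g x y b) ∨ (i ∉ S ∧ P i x b ∧ r i = rk g y x b)
      ∨ (i ∉ S ∧ ¬ P i x b ∧ r i = rk g y b x) := by
    intro i
    by_cases hi : i ∈ S
    · exact Or.inl ⟨hi, by simp [hrdef, hi]⟩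
    · by_cases hp : P i x b
      · exact Or.inr (Or.inl ⟨hi, hp, by simp [hrdef, hi, hp]⟩)
      · exact Or.inr (Or.inr ⟨hi, hp, by simp [hrdef, hi, hp]⟩)
  have hrinj : ∀ i, Function.Injective (r i) := by
    intro i
    rcases hcase i with ⟨_, h⟩ | ⟨_, _, h⟩ | ⟨_, _, h⟩ <;> rw [h]
    · exact rk_inj hg hxy (Ne.symm hbx) (Ne.symm hby)
    · exact rk_inj hg (Ne.symm hxy) (Ne.symm hby) (Ne.symm hbx)
    · exact rk_inj hg (Ne.symm hby) (Ne.symm hxy) hbx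
  set P' : ι → A → A → Prop := fun i a c => r i a < r i c with hP'def
  have hProf' : IsProfile P' := rank_profile r hrinj
  have hxyP' : ∀ i ∈ S, P' i x y := by
    intro i hi
    rcases hcase i with ⟨_, h⟩ | ⟨hi', _, _⟩ | ⟨hi', _, _⟩
    · show r i x < r i y
      rw [h, rk_x, rk_y hxy.symm]; omega
    · exact absurd hi hi'
    · exact absurd hi hi'
  have hyxP' : ∀ i ∉ S, P' i y x := by
    intro i hi
    rcases hcase i with ⟨hi', _⟩ | ⟨_, _, h⟩ | ⟨_, _, h⟩
    · exact absurd hi' hi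
    · show r i y < r i x
      rw [h, rk_x, rk_y hxy]; omega
    · show r i y < r i x
      rw [h, rk_x, rk_z hxy hbx.symm]; omega
  have h1 := hw P' hProf' hxyP' hyxP'
  have hyb : ∀ i, P' i y b := by
    intro i
    rcases hcase i with ⟨_, h⟩ | ⟨_, _, h⟩ | ⟨_, _, h⟩ <;>
      show r i y < r i b <;> rw [h]
    · rw [rk_y hxy.symm, rk_z hbx hby]; omega
    · rw [rk_x, rk_z hby hbx]; omega
    · rw [rk_x, rk_y hby]; omega
  have h2 := hPar P' hProf' y b hyb
  obtain ⟨htr, _⟩ := hF P' hProf'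
  have h3 : F P' x b := htr.trans _ _ _ h1.1 h2.1
  have h4 : ¬ F P' b x := fun hbx' => h2.2 (htr.trans _ _ _ hbx' h1.1)
  have e1 : {i | P i x b} = {i | P' i x b} := by
    ext i
    simp only [Set.mem_setOf_eq]
    rcases hcase i with ⟨hi, h⟩ | ⟨_, hp, h⟩ | ⟨_, hp, h⟩
    · refine iff_of_true (hS i hi) ?_
      show r i x < r i b
      rw [h, rk_x, rk_z hbx hby]; omega
    · refine iff_of_true hp ?_
      show r i x < r i b
      rw [h, rk_y hxy, rk_z hby hbx]; omega
    · refine iff_of_false hp ?_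
      show ¬ (r i x < r i b)
      rw [h, rk_z hxy hbx.symm, rk_y hby]; omega
  have e2 : {i | P i b x} = {i | P' i b x} := by
    ext i
    simp only [Set.mem_setOf_eq]
    rcases hcase i with ⟨hi, h⟩ | ⟨_, hp, h⟩ | ⟨_, hp, h⟩
    · refine iff_of_false (sto_asymm (hProf i) (hS i hi)) ?_
      show ¬ (r i b < r i x)
      rw [h, rk_x, rk_z hbx hby]; omega
    · refine iff_of_false (sto_asymm (hProf i) hp) ?_
      show ¬ (r i b < r i x)
      rw [h, rk_y hxy, rk_z hby hbx]; omega
    · refine iff_of_true (sto_total (hProf i) hbx.symm hp) ?_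
      show r i b < r i x
      rw [h, rk_z hxy hbx.symm, rk_y hby]; omega
  exact ⟨(hI P P' hProf hProf' x b e1).mpr h3,
    fun h => h4 ((hI P P' hProf hProf' b x e2).mp h)⟩

lemma lemB (hF : IsSPF F) (hPar : ParetoSPF F) (hI : IIA F) {S : Set ι} {x y a : A}
    (hxy : x ≠ y) (hax : a ≠ x) (hay : a ≠ y) (hw : WDec F S x y) : Dec F S a y := by
  classical
  intro P hProf hS
  obtain ⟨g, hg⟩ := gexists (A := A)
  set r : ι → A → ℕ := fun i =>
    if i ∈ S then rk g a x y else if P i a y then rk g a y x else rk g y a x with hrdef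
  have hcase : ∀ i, (i ∈ S ∧ r i = rk g a x y) ∨ (i ∉ S ∧ P i a y ∧ r i = rk g a y x)
      ∨ (i ∉ S ∧ ¬ P i a y ∧ r i = rk g y a x) := by
    intro i
    by_cases hi : i ∈ S
    · exact Or.inl ⟨hi, by simp [hrdef, hi]⟩
    · by_cases hp : P i a y
      · exact Or.inr (Or.inl ⟨hi, hp, by simp [hrdef, hi, hp]⟩)
      · exact Or.inr (Or.inr ⟨hi, hp, by simp [hrdef, hi, hp]⟩)
  have hrinj : ∀ i, Function.Injective (r i) := by
    intro i
    rcases hcase i with ⟨_, h⟩ | ⟨_, _, h⟩ | ⟨_, _, h⟩ <;> rw [h]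
    · exact rk_inj hg hax hay hxy
    · exact rk_inj hg hay hax hxy.symm
    · exact rk_inj hg hay.symm hxy.symm hax
  set P' : ι → A → A → Prop := fun i a c => r i a < r i c with hP'def
  have hProf' : IsProfile P' := rank_profile r hrinj
  -- everyone prefers a over x
  have hax' : ∀ i, P' i a x := by
    intro i
    rcases hcase i with ⟨_, h⟩ | ⟨_, _, h⟩ | ⟨_, _, h⟩ <;>
      show r i a < r i x <;> rw [h]
    · rw [rk_x, rk_y hax.symm]; omega
    · rw [rk_x, rk_z hax.symm hxy]; omega
    · rw [rk_y hay, rk_z hxy hax.symm]; omega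
  have h2 := hPar P' hProf' a x hax'
  -- S prefers x over y, complement y over x
  have hxyP' : ∀ i ∈ S, P' i x y := by
    intro i hi
    rcases hcase i with ⟨_, h⟩ | ⟨hi', _, _⟩ | ⟨hi', _, _⟩
    · show r i x < r i y
      rw [h, rk_y hax.symm, rk_z hay.symm hxy.symm]; omega
    · exact absurd hi hi'
    · exact absurd hi hi'
  have hyxP' : ∀ i ∉ S, P' i y x := by
    intro i hi
    rcases hcase i with ⟨hi', _⟩ | ⟨_, _, h⟩ | ⟨_, _, h⟩
    · exact absurd hi' hi
    · show r i y < r i x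
      rw [h, rk_y hay.symm, rk_z hax.symm hxy]; omega
    · show r i y < r i x
      rw [h, rk_x, rk_z hxy hax.symm]; omega
  have h1 := hw P' hProf' hxyP' hyxP'
  obtain ⟨htr, _⟩ := hF P' hProf'
  have h3 : F P' a y := htr.trans _ _ _ h2.1 h1.1
  have h4 : ¬ F P' y a := fun hya => h1.2 (htr.trans _ _ _ hya h2.1)
  have e1 : {i | P i a y} = {i | P' i a y} := by
    ext i
    simp only [Set.mem_setOf_eq]
    rcases hcase i with ⟨hi, h⟩ | ⟨_, hp, h⟩ | ⟨_, hp, h⟩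
    · refine iff_of_true (hS i hi) ?_
      show r i a < r i y
      rw [h, rk_x, rk_z hay.symm hxy.symm]; omega
    · refine iff_of_true hp ?_
      show r i a < r i y
      rw [h, rk_x, rk_y hay.symm]; omega
    · refine iff_of_false hp ?_
      show ¬ (r i a < r i y)
      rw [h, rk_x, rk_y hay]; omega
  have e2 : {i | P i y a} = {i | P' i y a} := by
    ext i
    simp only [Set.mem_setOf_eq]
    rcases hcase i with ⟨hi, h⟩ | ⟨_, hp, h⟩ | ⟨_, hp, h⟩
    · refine iff_of_false (sto_asymm (hProf i) (hS i hi)) ?_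
      show ¬ (r i y < r i a)
      rw [h, rk_x, rk_z hay.symm hxy.symm]; omega
    · refine iff_of_false (sto_asymm (hProf i) hp) ?_
      show ¬ (r i y < r i a)
      rw [h, rk_x, rk_y hay.symm]; omega
    · refine iff_of_true (sto_total (hProf i) hay hp) ?_
      show r i y < r i a
      rw [h, rk_x, rk_y hay]; omega
  exact ⟨(hI P P' hProf hProf' a y e1).mpr h3,
    fun h => h4 ((hI P P' hProf hProf' y a e2).mp h)⟩

lemma expansion (hF : IsSPF F) (hPar : ParetoSPF F) (hI : IIA F)
    (hA : 2 < Fintype.card A) {S : Set ι} {x y : A} (hxy : x ≠ y)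
    (hw : WDec F S x y) : ∀ a b : A, a ≠ b → Dec F S a b := by
  have key1 : ∀ b : A, b ≠ x → Dec F S x b := by
    intro b hb
    by_cases hby : b = y
    · subst hby
      obtain ⟨c, hcx, hcb⟩ := exists_third hA x b
      have d1 : Dec F S x c := lemA hF hPar hI hxy hcx hcb hw
      exact lemA hF hPar hI hcx.symm hb hcb.symm d1.toWDec
    · exact lemA hF hPar hI hxy hb hby hw
  intro a b hab
  by_cases hax : a = x
  · subst hax
    exact key1 b (Ne.symm hab)
  · by_cases hbx : b = x
    · subst hbx
      obtain ⟨c, hca, hcb⟩ := exists_third hA a b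
      have d1 : Dec F S b c := key1 c hcb
      have d2 : Dec F S a c := lemB hF hPar hI hcb.symm hax hca.symm d1.toWDec
      exact lemA hF hPar hI hca.symm hab.symm hcb.symm d2.toWDec
    · have d1 : Dec F S x b := key1 b hbx
      exact lemB hF hPar hI (Ne.symm hbx) hax hab d1.toWDec

lemma contraction (hF : IsSPF F) (hPar : ParetoSPF F) (hI : IIA F)
    (hA : 2 < Fintype.card A) {S1 S2 : Set ι} (hdisj : Disjoint S1 S2)
    (hS : ∀ x y : A, x ≠ y → Dec F (S1 ∪ S2) x y) :
    (∀ x y : A, x ≠ y → Dec F S1 x y) ∨ (∀ x y : A, x ≠ y → Dec F S2 x y) := by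
  classical
  have hne : Nonempty A := Fintype.card_pos_iff.mp (by omega)
  obtain ⟨x⟩ := hne
  obtain ⟨y, hyx, -⟩ := exists_third hA x x
  obtain ⟨z, hzx, hzy⟩ := exists_third hA x y
  obtain ⟨g, hg⟩ := gexists (A := A)
  set r : ι → A → ℕ := fun i =>
    if i ∈ S1 then rk g x y z else if i ∈ S2 then rk g y z x else rk g z x y with hrdef
  have hcase : ∀ i, (i ∈ S1 ∧ r i = rk g x y z) ∨ (i ∉ S1 ∧ i ∈ S2 ∧ r i = rk g y z x)
      ∨ (i ∉ S1 ∧ i ∉ S2 ∧ r i = rk g z x y) := by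
    intro i
    by_cases h1 : i ∈ S1
    · exact Or.inl ⟨h1, by simp [hrdef, h1]⟩
    · by_cases h2 : i ∈ S2
      · exact Or.inr (Or.inl ⟨h1, h2, by simp [hrdef, h1, h2]⟩)
      · exact Or.inr (Or.inr ⟨h1, h2, by simp [hrdef, h1, h2]⟩)
  have hrinj : ∀ i, Function.Injective (r i) := by
    intro i
    rcases hcase i with ⟨_, h⟩ | ⟨_, _, h⟩ | ⟨_, _, h⟩ <;> rw [h]
    · exact rk_inj hg hyx.symm hzx.symm hzy.symm
    · exact rk_inj hg hzy.symm hyx hzx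
    · exact rk_inj hg hzx hzy hyx.symm
  set P : ι → A → A → Prop := fun i a c => r i a < r i c with hPdef
  have hProf : IsProfile P := rank_profile r hrinj
  -- all of S1 ∪ S2 prefer y over z
  have hyz : ∀ i ∈ S1 ∪ S2, P i y z := by
    intro i hi
    rcases hcase i with ⟨_, h⟩ | ⟨_, _, h⟩ | ⟨h1, h2, _⟩
    · show r i y < r i z
      rw [h, rk_y hyx, rk_z hzx hzy]; omega
    · show r i y < r i z
      rw [h, rk_x, rk_y hzy]; omega
    · rcases hi with hi | hi
      · exact absurd hi h1
      · exact absurd hi h2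
  have hsoc := hS y z (Ne.symm hzy) P hProf hyz
  -- membership characterizations
  have hmem1 : ∀ i, P i x z ↔ i ∈ S1 := by
    intro i
    rcases hcase i with ⟨h1, h⟩ | ⟨h1, _, h⟩ | ⟨h1, _, h⟩
    · refine iff_of_true ?_ h1
      show r i x < r i z
      rw [h, rk_x, rk_z hzx hzy]; omega
    · refine iff_of_false ?_ h1
      show ¬ (r i x < r i z)
      rw [h, rk_y hzy, rk_z hyx.symm hzx.symm]; omega
    · refine iff_of_false ?_ h1
      show ¬ (r i x < r i z)
      rw [h, rk_x, rk_y hzx.symm]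
      omega
  have hmem2 : ∀ i, P i y x ↔ i ∈ S2 ∧ i ∉ S1 := by
    intro i
    rcases hcase i with ⟨h1, h⟩ | ⟨h1, h2, h⟩ | ⟨h1, h2, h⟩
    · refine iff_of_false ?_ (fun hc => hc.2 h1)
      show ¬ (r i y < r i x)
      rw [h, rk_x, rk_y hyx]; omega
    · refine iff_of_true ?_ ⟨h2, h1⟩
      show r i y < r i x
      rw [h, rk_x, rk_z hyx.symm hzx.symm]; omega
    · refine iff_of_false ?_ (fun hc => h2 hc.1)
      show ¬ (r i y < r i x)
      rw [h, rk_y hzx.symm, rk_z hzy.symm hyx]; omega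
  obtain ⟨htr, htot⟩ := hF P hProf
  by_cases hxz : F P x z ∧ ¬ F P z x
  · -- S1 weakly decisive for (x, z)
    left
    intro a b hab
    exact expansion hF hPar hI hA hzx.symm
      (wdec_of_profile hI hProf hzx.symm hmem1 hxz) a b hab
  · -- then F P z x, so y strictly above x socially
    have hzx' : F P z x := by
      by_cases h : F P x z
      · by_contra hzx''
        exact hxz ⟨h, hzx''⟩
      · exact (htot.total z x).resolve_right h
    have hyx' : F P y x ∧ ¬ F P x y := by
      constructor
      · exact htr.trans _ _ _ hsoc.1 hzx'
      · intro hxy'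
        exact hsoc.2 (htr.trans _ _ _ hzx' hxy')
    right
    intro a b hab
    have hmem2' : ∀ i, P i y x ↔ i ∈ S2 := by
      intro i
      rw [hmem2 i]
      constructor
      · exact fun h => h.1
      · intro h
        exact ⟨h, fun h1 => (Set.disjoint_left.mp hdisj h1) h⟩
    exact expansion hF hPar hI hA hyx
      (wdec_of_profile hI hProf hyx hmem2' hyx') a b hab

end Infra


/-- Arrow's theorem: an SPF on more than two alternatives satisfies Pareto and
IIA if and only if it is a dictatorship (the social preference always equals
the dictator's ballot). -/
theorem arrows_theorem {ι A : Type*} [Fintype ι] [Fintype A]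
    (hA : 2 < Fintype.card A)
    (F : (ι → A → A → Prop) → A → A → Prop)
    (hF : IsSPF F) :
    (ParetoSPF F ∧ IIA F) ↔
      ∃ i : ι, ∀ P, IsProfile P → ∀ x y : A, F P x y ↔ (P i x y ∨ x = y) := by
  classical
  constructor
  · rintro ⟨hPar, hI⟩
    have main : ∀ n (S : Finset ι), S.card = n → (∀ x y : A, x ≠ y → Dec F ↑S x y) →
        ∃ i : ι, ∀ x y : A, x ≠ y → Dec F {i} x y := by
      intro n
      induction n using Nat.strong_induction_on with
      | _ n ih =>
        intro S hcard hS
        rcases Nat.lt_or_ge n 2 with h2 | h2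
        · interval_cases n
          · have hS0 : S = ∅ := Finset.card_eq_zero.mp hcard
            obtain ⟨g, hg⟩ := gexists (A := A)
            have hProf0 : IsProfile (fun (_ : ι) (a b : A) => g a < g b) :=
              rank_profile (fun _ => g) (fun _ => hg)
            have hne : Nonempty A := Fintype.card_pos_iff.mp (by omega)
            obtain ⟨x⟩ := hne
            obtain ⟨y, hyx, -⟩ := exists_third hA x x
            have d1 := hS x y (Ne.symm hyx) _ hProf0 (by simp [hS0])
            have d2 := hS y x hyx _ hProf0 (by simp [hS0])
            exact (d1.2 d2.1).elim
          · obtain ⟨i, hi⟩ := Finset.card_eq_one.mp hcard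
            subst hi
            exact ⟨i, by simpa using hS⟩
        · have hpos : 0 < S.card := by omega
          obtain ⟨j, hj⟩ := Finset.card_pos.mp hpos
          have hdisj : Disjoint ({j} : Set ι) (↑(S.erase j) : Set ι) := by
            simp [Set.disjoint_left]
          have hunion : (↑S : Set ι) = {j} ∪ ↑(S.erase j) := by
            rw [Set.singleton_union, ← Finset.coe_insert, Finset.insert_erase hj]
          rw [hunion] at hS
          rcases contraction hF hPar hI hA hdisj hS with h | h
          · exact ⟨j, h⟩
          · have hlt : (S.erase j).card < n := by
              rw [Finset.card_erase_of_mem hj]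
              omega
            exact ih _ hlt _ rfl h
    have huniv : ∀ x y : A, x ≠ y → Dec F ↑(Finset.univ : Finset ι) x y := by
      intro x y _ P hProf h
      exact hPar P hProf x y (fun i => h i (by simp))
    obtain ⟨i, hi⟩ := main _ Finset.univ rfl huniv
    refine ⟨i, fun P hProf x y => ?_⟩
    constructor
    · intro hFxy
      by_cases hxy : x = y
      · exact Or.inr hxy
      · left
        by_contra hnp
        have hyx : P i y x := sto_total (hProf i) hxy hnp
        exact (hi y x (Ne.symm hxy) P hProf
          (fun j hj => by rw [Set.mem_singleton_iff] at hj; subst hj; exact hyx)).2 hFxy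
    · rintro (hp | rfl)
      · have hxy : x ≠ y := fun he => (hProf i).irrefl x (he ▸ hp)
        exact (hi x y hxy P hProf
          (fun j hj => by rw [Set.mem_singleton_iff] at hj; subst hj; exact hp)).1
      · exact ((hF P hProf).2.total x x).elim id id
  · rintro ⟨i, hi⟩
    constructor
    · intro P hProf x y h
      refine ⟨(hi P hProf x y).mpr (Or.inl (h i)), fun hyx => ?_⟩
      rcases (hi P hProf y x).mp hyx with h1 | h1
      · exact sto_asymm (hProf i) (h i) h1
      · exact (hProf i).irrefl x (h1 ▸ h i)
    · intro P P' hp hp' x y hset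
      have hiff : P i x y ↔ P' i x y := by
        have := Set.ext_iff.mp hset i
        simpa using this
      rw [hi P hp x y, hi P' hp' x y, hiff]
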